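/- Let X be a Banach space, {v_j}_{j∈ℕ} ⊂ X a bounded sequence, and k = {k_j}_{j∈ℕ} a strictly increasing sequence of natural numbers of density 1. If the Cesàro averages (1/n)∑_{j=0}^{n−1} v_j converge in norm to some L ∈ X, then the subsequential averages (1/n)∑_{j=0}^{n−1} v_{k_j} also converge in norm to L. -/

import Mathlib

open scoped Classical

/-- A strictly increasing sequence `k : ℕ → ℕ` has density `d` if
`|{0,1,…,n} ∩ range k| / (n+1) → d`. -/
def HasDensity (k : ℕ → ℕ) (d : ℝ) : Prop :=
  Filter.Tendsto
    (fun n : ℕ =>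
      (((Finset.range (n + 1)).filter (fun j => j ∈ Set.range k)).card : ℝ) / ((n : ℝ) + 1))
    Filter.atTop (nhds d)

/-!
Since `k` has density one, `k n / n → 1`. The first `n` terms of the subsequence are the terms
`v j`, `j < k n`, with `k n - n` of them removed, so the subsequential average differs from
`(k n / n) • (1 / k n) ∑_{j < k n} v j` by at most `(k n / n - 1) C`, and the latter converges
to `L`.
-/

open Filter Topology Finset

theorem hasDensity_iff_tendsto_card_div (k : ℕ → ℕ) (d : ℝ) :
    HasDensity k d ↔
      Tendsto (fun n : ℕ => (#{j ∈ range n | j ∈ Set.range k} : ℝ) / n) atTop (𝓝 d) := by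
  rw [← tendsto_add_atTop_iff_nat 1
    (f := fun n : ℕ => (#{j ∈ range n | j ∈ Set.range k} : ℝ) / n), HasDensity]
  push_cast
  rfl

theorem norm_sum_sub_sum_le_of_subset {ι E : Type*} [SeminormedAddCommGroup E] {s t : Finset ι}
    (hst : s ⊆ t) {v : ι → E} {C : ℝ} (hC : ∀ i, ‖v i‖ ≤ C) :
    ‖∑ i ∈ t, v i - ∑ i ∈ s, v i‖ ≤ ((#t : ℝ) - #s) * C := by
  rw [← sum_sdiff hst, add_sub_cancel_right]
  calc ‖∑ i ∈ t \ s, v i‖ ≤ ∑ _i ∈ t \ s, C := norm_sum_le_of_le _ fun i _ => hC i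
    _ = ((#t : ℝ) - #s) * C := by
      rw [sum_const, card_sdiff_of_subset hst, nsmul_eq_mul, Nat.cast_sub (card_le_card hst)]

namespace StrictMono

variable {k : ℕ → ℕ} (hk : StrictMono k)
include hk

theorem filter_range_mem_range_eq_image (n : ℕ) :
    {j ∈ range (k n) | j ∈ Set.range k} = (range n).image k := by
  ext m
  simp only [mem_filter, mem_range, mem_image, Set.mem_range]
  constructor
  · rintro ⟨hm, j, rfl⟩
    exact ⟨j, hk.lt_iff_lt.mp hm, rfl⟩
  · rintro ⟨j, hj, rfl⟩
    exact ⟨hk.lt_iff_lt.mpr hj, j, rfl⟩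

theorem card_filter_range_mem_range (n : ℕ) : #{j ∈ range (k n) | j ∈ Set.range k} = n := by
  rw [hk.filter_range_mem_range_eq_image, card_image_of_injective _ hk.injective, card_range]

theorem tendsto_div_of_hasDensity_one (hdens : HasDensity k 1) :
    Tendsto (fun n => (k n : ℝ) / n) atTop (𝓝 1) := by
  have h := ((hasDensity_iff_tendsto_card_div k 1).mp hdens).comp hk.tendsto_atTop
  simpa only [Function.comp_def, hk.card_filter_range_mem_range, inv_div, inv_one]
    using h.inv₀ one_ne_zero

theorem norm_sum_range_sub_sum_range_comp_le {E : Type*} [SeminormedAddCommGroup E] {v : ℕ → E}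
    {C : ℝ} (hC : ∀ j, ‖v j‖ ≤ C) (n : ℕ) :
    ‖∑ j ∈ range (k n), v j - ∑ j ∈ range n, v (k j)‖ ≤ ((k n : ℝ) - n) * C := by
  have hsub : (range n).image k ⊆ range (k n) :=
    hk.filter_range_mem_range_eq_image n ▸ filter_subset _ _
  have h := norm_sum_sub_sum_le_of_subset hsub hC
  rwa [sum_image hk.injective.injOn, card_image_of_injective _ hk.injective, card_range,
    card_range] at h

end StrictMono

theorem subsequential_cesaro_convergence_general {X : Type*} [NormedAddCommGroup X] [NormedSpace ℝ X]
    (v : ℕ → X) (C : ℝ) (hC : ∀ j : ℕ, ‖v j‖ ≤ C)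
    (k : ℕ → ℕ) (hk : StrictMono k) (hdens : HasDensity k 1) (L : X)
    (hconv : Filter.Tendsto
      (fun n : ℕ => (1 / (n : ℝ)) • ∑ j ∈ Finset.range n, v j) Filter.atTop (nhds L)) :
    Filter.Tendsto
      (fun n : ℕ => (1 / (n : ℝ)) • ∑ j ∈ Finset.range n, v (k j)) Filter.atTop (nhds L) := by
  have hratio := hk.tendsto_div_of_hasDensity_one hdens
  have hmain : Tendsto (fun n : ℕ => (1 / (n : ℝ)) • ∑ j ∈ range (k n), v j) atTop (𝓝 L) := by
    have h := hratio.smul (hconv.comp hk.tendsto_atTop)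
    rw [one_smul] at h
    refine h.congr' ?_
    filter_upwards [eventually_gt_atTop 0] with n hn
    have hkn : (k n : ℝ) ≠ 0 := by exact_mod_cast (hn.trans_le hk.le_apply).ne'
    simp only [Function.comp_apply, smul_smul]
    field_simp
  have herr : Tendsto (fun n : ℕ => (1 / (n : ℝ)) •
      (∑ j ∈ range (k n), v j - ∑ j ∈ range n, v (k j))) atTop (𝓝 0) := by
    refine squeeze_zero_norm' ?_ (by simpa using (hratio.sub_const 1).mul_const C)
    filter_upwards [eventually_gt_atTop 0] with n hn
    calc _ ≤ 1 / (n : ℝ) * (((k n : ℝ) - n) * C) := by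
          rw [norm_smul, Real.norm_of_nonneg (by positivity)]
          exact mul_le_mul_of_nonneg_left (hk.norm_sum_range_sub_sum_range_comp_le hC n)
            (by positivity)
      _ = ((k n : ℝ) / n - 1) * C := by field_simp
  simpa [smul_sub] using hmain.sub herr

/-- If `{v_j}` is a bounded sequence in a Banach space whose Cesàro averages converge in norm
to `L`, and `k` is a strictly increasing sequence of natural numbers of density `1`, then the
subsequential averages `(1/n) ∑_{j<n} v_{k_j}` also converge in norm to `L`. -/
theorem subsequential_cesaro_convergence {X : Type*} [NormedAddCommGroup X] [NormedSpace ℝ X]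
    [CompleteSpace X] (v : ℕ → X) (C : ℝ) (hC : ∀ j : ℕ, ‖v j‖ ≤ C)
    (k : ℕ → ℕ) (hk : StrictMono k) (hdens : HasDensity k 1) (L : X)
    (hconv : Filter.Tendsto
      (fun n : ℕ => (1 / (n : ℝ)) • ∑ j ∈ Finset.range n, v j) Filter.atTop (nhds L)) :
    Filter.Tendsto
      (fun n : ℕ => (1 / (n : ℝ)) • ∑ j ∈ Finset.range n, v (k j)) Filter.atTop (nhds L) :=
  subsequential_cesaro_convergence_general v C hC k hk hdens L hconv
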